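/- For S = F[[x,y]]/(x²y) and k ≥ 1, the S-module Y_k with generators m, n and relations mx = ny^k, nxy = 0 is isomorphic to the ideal (y^k, x) of S via m ↦ y^k, n ↦ x; in particular Y_1 is isomorphic to the maximal ideal (x,y). -/

import Mathlib

/-! The map `S² → S`, `(a, b) ↦ a y^k + b x`, has image `(y^k, x)`, so it suffices to show that
its kernel is generated by `(x, -y^k)` and `(0, xy)`. Lift `a y^k + b x = 0` to
`a y^k + b x = d x²y` in `F[[x,y]]`. As `y^k` is a non-zero-divisor modulo `x`, `x ∣ a`, say
`a = c x`; cancelling `x` then gives `b = d xy - c y^k`, i.e.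
`(a, b) = c (x, -y^k) + d (0, xy)`. -/

noncomputable section

/-- The D-infinity plane singularity `S = F[[x,y]]/(x²y)`. -/
abbrev Dinf (F : Type*) [Field F] : Type _ :=
  MvPowerSeries (Fin 2) F ⧸
    (Ideal.span {(MvPowerSeries.X (0 : Fin 2)) ^ 2 * MvPowerSeries.X 1} :
      Ideal (MvPowerSeries (Fin 2) F))

variable (F : Type*) [Field F]

/-- The image of the variable `x` in `S`. -/
abbrev xS : Dinf F := Ideal.Quotient.mk _ (MvPowerSeries.X 0)

/-- The image of the variable `y` in `S`. -/
abbrev yS : Dinf F := Ideal.Quotient.mk _ (MvPowerSeries.X 1)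

/-- The module `Y_k`, generated by `m, n` subject to `m x = n y^k` and `n x y = 0`;
realized as the quotient of the free module `S × S` (with `m = (1,0)`, `n = (0,1)`)
by the submodule generated by the relations. -/
abbrev Ymod (k : ℕ) : Type _ :=
  (Dinf F × Dinf F) ⧸
    (Submodule.span (Dinf F) {(xS F, -(yS F ^ k)), ((0 : Dinf F), xS F * yS F)})

namespace MvPowerSeries

variable {σ R : Type*} [CommSemiring R]

theorem X_dvd_mul_X_pow_iff {s t : σ} (hst : s ≠ t) (k : ℕ) {φ : MvPowerSeries σ R} :
    X s ∣ φ * X t ^ k ↔ X s ∣ φ := by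
  refine ⟨fun h => X_dvd_iff.2 fun m hm => ?_, fun h => h.mul_right _⟩
  simpa [X_pow_eq, coeff_add_mul_monomial, hm, hst] using X_dvd_iff.1 h (m + Finsupp.single t k)

theorem isLeftRegular_X (s : σ) : IsLeftRegular (X s : MvPowerSeries σ R) := by
  intro φ ψ (h : X s * φ = X s * ψ)
  ext m
  have := congrArg (coeff (Finsupp.single s 1 + m)) h
  rwa [X_def, coeff_add_monomial_mul, coeff_add_monomial_mul, one_mul, one_mul] at this

end MvPowerSeries

section TwoRelations

variable {R : Type*} [CommRing R] {I : Ideal R} {x u w : R}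

theorem exists_eq_of_mul_add_mul_eq (hx : IsLeftRegular x) (hu : ∀ a, x ∣ a * u → x ∣ a)
    {a b d : R} (h : a * u + b * x = d * (x * w)) :
    ∃ c, a = c * x ∧ b = d * w - c * u := by
  obtain ⟨c, rfl⟩ := hu a ⟨d * w - b, by linear_combination h⟩
  exact ⟨c, mul_comm x c, (hx (by linear_combination h : x * b = x * (d * w - c * u)))⟩

open Ideal.Quotient in
theorem ker_coprod_toSpanSingleton_quotient (hI : I = Ideal.span {x * w}) (hx : IsLeftRegular x)
    (hu : ∀ a, x ∣ a * u → x ∣ a) :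
    LinearMap.ker ((LinearMap.toSpanSingleton (R ⧸ I) _ (mk I u)).coprod
        (LinearMap.toSpanSingleton _ _ (mk I x))) =
      Submodule.span (R ⧸ I) {(mk I x, -mk I u), (0, mk I w)} := by
  have hwx : mk I w * mk I x = 0 := by
    rw [← map_mul, eq_zero_iff_mem, hI, mul_comm]
    exact Ideal.mem_span_singleton_self _
  apply le_antisymm
  · rintro ⟨a, b⟩ hab
    obtain ⟨a, rfl⟩ := mk_surjective a
    obtain ⟨b, rfl⟩ := mk_surjective b
    have hmem : a * u + b * x ∈ I := by
      simpa [← eq_zero_iff_mem] using hab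
    rw [hI, Ideal.mem_span_singleton'] at hmem
    obtain ⟨d, hd⟩ := hmem
    obtain ⟨c, rfl, rfl⟩ := exists_eq_of_mul_add_mul_eq hx hu hd.symm
    have hdecomp : (mk I (c * x), mk I (d * w - c * u)) =
        mk I c • (mk I x, -mk I u) + mk I d • ((0 : R ⧸ I), mk I w) := by
      ext <;> simp only [Prod.fst_add, Prod.snd_add, Prod.smul_fst, Prod.smul_snd, smul_eq_mul,
        map_mul, map_sub] <;> ring
    rw [hdecomp]
    exact Submodule.add_mem _ (Submodule.smul_mem _ _ (Submodule.subset_span (.inl rfl)))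
      (Submodule.smul_mem _ _ (Submodule.subset_span (.inr rfl)))
  · rw [Submodule.span_le]
    rintro v (rfl | rfl) <;> simp [hwx, mul_comm]

end TwoRelations

namespace LinearMap

theorem range_coprod_toSpanSingleton {S : Type*} [CommSemiring S] (a b : S) :
    range ((toSpanSingleton S S a).coprod (toSpanSingleton S S b)) = Ideal.span {a, b} := by
  rw [range_coprod, ← span_singleton_eq_range, ← span_singleton_eq_range, Ideal.span,
    Submodule.span_insert]

theorem exists_quotEquiv_of_ker_eq_of_range_eq {R M N : Type*} [Ring R]
    [AddCommGroup M] [AddCommGroup N] [Module R M] [Module R N] (f : M →ₗ[R] N)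
    {K : Submodule R M} {P : Submodule R N} (hK : ker f = K) (hP : range f = P) :
    ∃ e : (M ⧸ K) ≃ₗ[R] P, ∀ v, (e (Submodule.Quotient.mk v) : N) = f v := by
  subst hK hP
  exact ⟨f.quotKerEquivRange, f.quotKerEquivRange_apply_mk⟩

end LinearMap

open MvPowerSeries in
theorem exists_ymodEquiv (k : ℕ) :
    ∃ e : Ymod F k ≃ₗ[Dinf F] (Ideal.span {yS F ^ k, xS F} : Ideal (Dinf F)),
      ∀ a b, (e (Submodule.Quotient.mk (a, b)) : Dinf F) = a * yS F ^ k + b * xS F := by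
  have hI : Ideal.span {(X 0 : MvPowerSeries (Fin 2) F) ^ 2 * X 1} =
      Ideal.span {X 0 * (X 0 * X 1)} := by
    ring_nf
  have hker := ker_coprod_toSpanSingleton_quotient hI (isLeftRegular_X 0)
    (fun _ => (X_dvd_mul_X_pow_iff (t := 1) (by decide) k).1)
  rw [map_pow, map_mul] at hker
  obtain ⟨e, he⟩ := LinearMap.exists_quotEquiv_of_ker_eq_of_range_eq _ hker
    (LinearMap.range_coprod_toSpanSingleton _ _)
  exact ⟨e, fun a b => he (a, b)⟩

theorem stmt17 (k : ℕ) :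
    (∃ e : Ymod F k ≃ₗ[Dinf F] (Ideal.span {yS F ^ k, xS F} : Ideal (Dinf F)),
      e (Submodule.Quotient.mk (1, 0)) =
        ⟨yS F ^ k, Ideal.subset_span (Set.mem_insert _ _)⟩ ∧
      e (Submodule.Quotient.mk (0, 1)) =
        ⟨xS F, Ideal.subset_span (Set.mem_insert_of_mem _ rfl)⟩) ∧
    Nonempty (Ymod F 1 ≃ₗ[Dinf F] (Ideal.span {xS F, yS F} : Ideal (Dinf F))) := by
  obtain ⟨e, he⟩ := exists_ymodEquiv F k
  obtain ⟨e₁, -⟩ := exists_ymodEquiv F 1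
  refine ⟨⟨e, Subtype.ext ?_, Subtype.ext ?_⟩, ⟨e₁ ≪≫ₗ LinearEquiv.ofEq _ _ ?_⟩⟩
  · simp [he]
  · simp [he]
  · rw [pow_one, Ideal.span_pair_comm]
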